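/- arXiv:1912.03873 — 2 statements merged into one kernel-verified Lean document; each statement's English description precedes it below -/
import Mathlib

section
/- Let d ≥ 1 be an integer, 1/2 < δ ≤ 1, and M ≥ d+1 a real number. Let (λ_m)_{m≥1} be an injective sequence in ℤ^d with |λ_m| ≤ √d · m^{1/d} for all m ≥ 1. Then there exists a constant C > 0 (depending only on d, δ, M) such that: (i) for every integer j ≥ 1 and every x ∈ ℝ^d with 2^{j−1} < |x| ≤ 2^j, one has ∑_{m=100}^∞ (1/(m (ln m)^δ)) (1+|x−λ_m|)^{−M} ≤ C · 2^{−jd} (1+j)^{−δ}; and (ii) for every x ∈ ℝ^d with |x| ≤ 1, one has ∑_{m=100}^∞ (1/(m (ln m)^δ)) (1+|x−λ_m|)^{−M} ≤ C. -/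
/-!
Split the series at `K = 2^((j-d-2)d)`. For `m ≤ K` the lattice point `λ_m` has norm at most
`√d K^(1/d) ≤ 2^(j-2)`, so `|x - λ_m| ≥ 2^(j-2)` on the shell and the head is at most
`2^(-(j-2)M) (1 + ln K) ≲ 2^(-jd) j 2^(-j)` because `M ≥ d + 1`. For `m > K` the weight is at most
`1/(K (ln K)^δ) ≲ 2^(-jd) (1+j)^(-δ)`, and the remaining sum is bounded by the lattice sum
`∑_{z ∈ ℤ^d} (1 + |x - z|)^(-M)`, which is bounded uniformly in `x` because `M > d`: it is dominated
by a product of `d` one-dimensional sums `∑_{k ∈ ℤ} (1 + |t - k|)^(-M/d)`. This uniform bound also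
gives part (ii) and the finitely many small `j`.
-/

open Real

noncomputable section

/-- The embedding of an integer lattice point into `ℝ^d` with the Euclidean norm. -/
def toEuc {d : ℕ} (z : Fin d → ℤ) : EuclideanSpace ℝ (Fin d) :=
  (WithLp.equiv 2 (Fin d → ℝ)).symm fun i => (z i : ℝ)

open Finset

theorem one_add_norm_rpow_neg_le_prod {ι : Type*} [Fintype ι] [Nonempty ι] {M : ℝ} (hM : 0 ≤ M)
    (v : EuclideanSpace ℝ ι) :
    (1 + ‖v‖) ^ (-M) ≤ ∏ i, (1 + |v i|) ^ (-(M / Fintype.card ι)) := by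
  have hn : (Fintype.card ι : ℝ) ≠ 0 := by positivity
  calc (1 + ‖v‖) ^ (-M) = ∏ _i : ι, (1 + ‖v‖) ^ (-(M / Fintype.card ι)) := by
        rw [prod_const, card_univ, ← rpow_mul_natCast (by positivity)]
        field_simp
    _ ≤ ∏ i, (1 + |v i|) ^ (-(M / Fintype.card ι)) := by
        refine prod_le_prod (fun i _ => by positivity) fun i _ => ?_
        exact rpow_le_rpow_of_nonpos (by positivity)
          (by simpa using PiLp.norm_apply_le v i)
          (by simp only [neg_nonpos]; positivity)

theorem summable_one_add_abs_intCast_rpow_neg {p : ℝ} (hp : 1 < p) :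
    Summable fun m : ℤ => (1 + |(m : ℝ)|) ^ (-p) := by
  refine ((Real.summable_one_div_int_add_rpow (1 / 2) p).mpr hp).of_nonneg_of_le
    (fun m => by positivity) fun m => ?_
  have hpos : 0 < |(m : ℝ) + 1 / 2| := abs_pos.mpr fun h => by
    have : (2 * m + 1 : ℝ) = 0 := by linarith
    exact_mod_cast (by omega : (2 * m + 1 : ℤ) ≠ 0) (by exact_mod_cast this)
  rw [rpow_neg (by positivity), ← one_div]
  gcongr
  calc |(m : ℝ) + 1 / 2| ≤ |(m : ℝ)| + |1 / 2| := abs_add_le _ _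
    _ ≤ 1 + |(m : ℝ)| := by norm_num; linarith

theorem sum_one_add_abs_sub_intCast_rpow_neg_le {p : ℝ} (hp : 1 < p) (t : ℝ) (T : Finset ℤ) :
    ∑ k ∈ T, (1 + |t - k|) ^ (-p) ≤ 2 ^ p * ∑' m : ℤ, (1 + |(m : ℝ)|) ^ (-p) := by
  have hs := summable_one_add_abs_intCast_rpow_neg hp
  -- compare with the lattice point `⌊t⌋`, at distance less than one from `t`
  have hterm : ∀ k : ℤ, (1 + |t - k|) ^ (-p) ≤ 2 ^ p * (1 + |((⌊t⌋ - k : ℤ) : ℝ)|) ^ (-p) := by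
    intro k
    have hfloor : 1 + |((⌊t⌋ - k : ℤ) : ℝ)| ≤ 2 * (1 + |t - k|) := by
      have := abs_sub_le (⌊t⌋ : ℝ) t k
      have := Int.floor_le t
      have := Int.lt_floor_add_one t
      have := abs_nonneg (t - k)
      push_cast
      rw [abs_sub_comm (⌊t⌋ : ℝ) t, abs_of_nonneg (by linarith : (0 : ℝ) ≤ t - ⌊t⌋)] at *
      linarith
    calc (1 + |t - k|) ^ (-p) = 2 ^ p * (2 * (1 + |t - k|)) ^ (-p) := by
          rw [mul_rpow (by norm_num) (by positivity), rpow_neg (by norm_num : (0 : ℝ) ≤ 2),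
            ← mul_assoc, mul_inv_cancel₀ (by positivity), one_mul]
      _ ≤ 2 ^ p * (1 + |((⌊t⌋ - k : ℤ) : ℝ)|) ^ (-p) := by
          gcongr _ * ?_
          exact rpow_le_rpow_of_nonpos (by positivity) hfloor (by linarith)
  calc ∑ k ∈ T, (1 + |t - k|) ^ (-p)
      ≤ ∑ k ∈ T, 2 ^ p * (1 + |((⌊t⌋ - k : ℤ) : ℝ)|) ^ (-p) := sum_le_sum fun k _ => hterm k
    _ = 2 ^ p * ∑ k ∈ T, (1 + |(((Equiv.subLeft ⌊t⌋) k : ℤ) : ℝ)|) ^ (-p) := by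
          rw [mul_sum]; rfl
    _ ≤ 2 ^ p * ∑' m : ℤ, (1 + |(m : ℝ)|) ^ (-p) := by
          gcongr
          rw [← (Equiv.subLeft ⌊t⌋).tsum_eq]
          exact ((Equiv.summable_iff _).mpr hs).sum_le_tsum _ fun _ _ => by positivity

theorem exists_sum_one_add_norm_sub_rpow_neg_le {d : ℕ} (hd : 0 < d) {M : ℝ} (hM : d < M) :
    ∃ A, ∀ (x : EuclideanSpace ℝ (Fin d)) (s : Finset (Fin d → ℤ)),
      ∑ z ∈ s, (1 + ‖x - toEuc z‖) ^ (-M) ≤ A := by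
  have : Nonempty (Fin d) := ⟨⟨0, hd⟩⟩
  have hM0 : 0 ≤ M := by linarith [(Nat.cast_nonneg d : (0 : ℝ) ≤ d)]
  set p := M / d
  have hp : 1 < p := by rw [lt_div_iff₀ (by positivity)]; simpa using hM
  set B := 2 ^ p * ∑' m : ℤ, (1 + |(m : ℝ)|) ^ (-p)
  refine ⟨B ^ d, fun x s => ?_⟩
  let t : Fin d → Finset ℤ := fun i => s.image (· i)
  have hsub : s ⊆ Fintype.piFinset t := fun z hz => Fintype.mem_piFinset.mpr fun i =>
    mem_image_of_mem _ hz
  calc ∑ z ∈ s, (1 + ‖x - toEuc z‖) ^ (-M)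
      ≤ ∑ z ∈ s, ∏ i, (1 + |x i - z i|) ^ (-p) := by
        refine sum_le_sum fun z _ => ?_
        simpa [toEuc, p] using one_add_norm_rpow_neg_le_prod hM0 (x - toEuc z)
    _ ≤ ∑ z ∈ Fintype.piFinset t, ∏ i, (1 + |x i - z i|) ^ (-p) :=
        sum_le_sum_of_subset_of_nonneg hsub fun _ _ _ => by positivity
    _ = ∏ i, ∑ k ∈ t i, (1 + |x i - k|) ^ (-p) :=
        (prod_univ_sum t fun i k => (1 + |x i - k|) ^ (-p)).symm
    _ ≤ ∏ _i : Fin d, B := prod_le_prod (fun _ _ => by positivity)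
        fun i _ => sum_one_add_abs_sub_intCast_rpow_neg_le hp (x i) (t i)
    _ = B ^ d := by simp

theorem sum_ite_comp_le_of_injOn {ι β : Type*} [DecidableEq β] {p : ι → Prop} [DecidablePred p]
    {u : ι → β} (hu : Set.InjOn u {i | p i}) {f : β → ℝ} {A : ℝ}
    (hf : ∀ s : Finset β, ∑ b ∈ s, f b ≤ A) (t : Finset ι) :
    ∑ i ∈ t, (if p i then f (u i) else 0) ≤ A := by
  rw [← sum_filter, ← sum_image (s := t.filter p) fun i hi j hj =>
    hu (mem_filter.mp hi).2 (mem_filter.mp hj).2]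
  exact hf _

-- the `m = 0` term is `0⁻¹ = 0`
theorem sum_range_succ_natCast_inv (K : ℕ) : ∑ m ∈ range (K + 1), (m : ℝ)⁻¹ = harmonic K := by
  rw [sum_range_succ', harmonic]
  push_cast
  simp

theorem tsum_le_of_head_tail {F G : ℕ → ℝ} {A B ε : ℝ} (K : ℕ) (hF : 0 ≤ F) (hε : 0 ≤ ε)
    (hB : 0 ≤ B) (hG : ∀ t : Finset ℕ, ∑ m ∈ t, G m ≤ A)
    (hhead : ∀ m ≤ K, F m ≤ ε * (m : ℝ)⁻¹) (htail : ∀ m, K < m → F m ≤ B * G m) :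
    ∑' m, F m ≤ ε * (1 + Real.log K) + B * A := by
  refine Real.tsum_le_of_sum_le hF fun t => ?_
  rw [← sum_filter_add_sum_filter_not t (· ≤ K)]
  gcongr
  · calc ∑ m ∈ t with m ≤ K, F m ≤ ∑ m ∈ t with m ≤ K, ε * (m : ℝ)⁻¹ :=
          sum_le_sum fun m hm => hhead m (mem_filter.mp hm).2
      _ ≤ ∑ m ∈ range (K + 1), ε * (m : ℝ)⁻¹ :=
          sum_le_sum_of_subset_of_nonneg (fun m hm => mem_range.mpr (by grind))
            fun _ _ _ => by positivity
      _ ≤ ε * (1 + Real.log K) := by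
          rw [← mul_sum, sum_range_succ_natCast_inv]
          gcongr
          exact harmonic_le_one_add_log K
  · calc ∑ m ∈ t with ¬m ≤ K, F m ≤ ∑ m ∈ t with ¬m ≤ K, B * G m :=
          sum_le_sum fun m hm => htail m (not_le.mp (mem_filter.mp hm).2)
      _ ≤ B * A := by rw [← mul_sum]; gcongr; exact hG _

theorem one_le_log_natCast {m : ℕ} (hm : 3 ≤ m) : 1 ≤ Real.log m := by
  rw [le_log_iff_exp_le (by positivity)]
  have : (3 : ℝ) ≤ m := by exact_mod_cast hm
  linarith [exp_one_lt_d9]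

theorem one_div_mul_log_rpow_le_inv {δ : ℝ} (hδ : 0 ≤ δ) {m : ℕ} (hm : 3 ≤ m) :
    1 / ((m : ℝ) * Real.log m ^ δ) ≤ (m : ℝ)⁻¹ := by
  have : (3 : ℝ) ≤ m := by exact_mod_cast hm
  rw [one_div]
  gcongr
  exact le_mul_of_one_le_right (by positivity) (one_le_rpow (one_le_log_natCast hm) hδ)

theorem one_div_mul_log_rpow_le_of_le {δ : ℝ} (hδ : 0 ≤ δ) {x y : ℝ} (hx : 1 < x) (hxy : x ≤ y) :
    1 / (y * Real.log y ^ δ) ≤ 1 / (x * Real.log x ^ δ) := by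
  have hlog : 0 < Real.log x := log_pos hx
  gcongr
  linarith

theorem one_add_norm_sub_rpow_neg_le {E : Type*} [SeminormedAddCommGroup E] {M r : ℝ} (hM : 0 ≤ M)
    (hr : 0 < r) {x y : E} (hy : ‖y‖ ≤ r) (hx : 2 * r ≤ ‖x‖) :
    (1 + ‖x - y‖) ^ (-M) ≤ r ^ (-M) :=
  rpow_le_rpow_of_nonpos hr (by linarith [norm_sub_norm_le x y]) (by linarith)

theorem sqrt_mul_rpow_one_div_le {d : ℕ} (hd : 0 < d) {m y : ℝ} (hm : 0 ≤ m) (hy : 0 ≤ y)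
    (hmy : m ≤ y ^ d) : √d * m ^ (1 / d : ℝ) ≤ 2 ^ d * y := by
  have hsqrt : √(d : ℝ) ≤ 2 ^ d := by
    rw [sqrt_le_left (by positivity)]
    calc (d : ℝ) ≤ 2 ^ d := by exact_mod_cast Nat.lt_two_pow_self.le
      _ ≤ (2 ^ d) ^ 2 := le_self_pow₀ (one_le_pow₀ (by norm_num)) (by norm_num)
  have hroot : m ^ (1 / d : ℝ) ≤ y := by
    rw [one_div, rpow_inv_le_iff_of_pos hm hy (by positivity), rpow_natCast]
    exact hmy
  gcongr

def dyadicDecay (d : ℕ) (δ : ℝ) (j : ℕ) : ℝ := ((2 : ℝ) ^ (j * d))⁻¹ * (1 + (j : ℝ)) ^ (-δ)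

theorem dyadicDecay_pos (d : ℕ) (δ : ℝ) (j : ℕ) : 0 < dyadicDecay d δ j := by
  unfold dyadicDecay
  positivity

theorem dyadicDecay_anti {d : ℕ} {δ : ℝ} (hδ : 0 ≤ δ) {i j : ℕ} (hij : i ≤ j) :
    dyadicDecay d δ j ≤ dyadicDecay d δ i := by
  unfold dyadicDecay
  have hij' : (1 + i : ℝ) ≤ 1 + j := by gcongr
  gcongr ?_ * ?_
  · exact inv_anti₀ (by positivity) (pow_le_pow_right₀ one_le_two (by gcongr))
  · exact rpow_le_rpow_of_nonpos (by positivity) hij' (by linarith)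

theorem one_add_sq_le_four_mul_two_pow (j : ℕ) : (1 + j) ^ 2 ≤ 4 * 2 ^ j := by
  induction j with
  | zero => norm_num
  | succ j ih =>
    rcases Nat.lt_or_ge j 2 with hj | hj
    · interval_cases j <;> norm_num
    · calc (1 + (j + 1)) ^ 2 ≤ 2 * (1 + j) ^ 2 := by nlinarith
        _ ≤ 4 * 2 ^ (j + 1) := by rw [pow_succ 2 j]; omega

theorem one_add_div_two_pow_le {δ : ℝ} (hδ : δ ≤ 1) (j : ℕ) :
    (1 + j : ℝ) / 2 ^ j ≤ 4 * (1 + j) ^ (-δ) := by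
  have hj : (1 : ℝ) ≤ 1 + j := by simp
  have hsq : (1 + j : ℝ) ^ (1 + δ) ≤ 4 * 2 ^ j :=
    calc (1 + j : ℝ) ^ (1 + δ) ≤ (1 + j) ^ (2 : ℝ) := rpow_le_rpow_of_exponent_le hj (by linarith)
      _ ≤ 4 * 2 ^ j := by rw [rpow_two]; exact_mod_cast one_add_sq_le_four_mul_two_pow j
  calc (1 + j : ℝ) / 2 ^ j = (1 + j) ^ (1 + δ) * (1 + j) ^ (-δ) / 2 ^ j := by
        rw [← rpow_add (by positivity)]; simp
    _ ≤ 4 * 2 ^ j * (1 + j) ^ (-δ) / 2 ^ j := by gcongr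
    _ = 4 * (1 + j) ^ (-δ) := by field_simp

theorem two_pow_rpow_neg_mul_le {d : ℕ} (hd : 1 ≤ d) {δ M : ℝ} (hδ : δ ≤ 1) (hM : d + 1 ≤ M)
    {j : ℕ} (hj : 2 ≤ j) {y : ℝ} (hy0 : 0 ≤ y) (hy : y ≤ j * d) :
    ((2 : ℝ) ^ (j - 2)) ^ (-M) * (1 + y) ≤ 4 ^ (d + 2) * d * dyadicDecay d δ j := by
  have hd1 : (1 : ℝ) ≤ d := by exact_mod_cast hd
  have hdecay : ((2 : ℝ) ^ (j - 2)) ^ (-M) ≤ (((2 : ℝ) ^ (j - 2)) ^ (d + 1))⁻¹ := by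
    rw [← rpow_natCast ((2 : ℝ) ^ (j - 2)) (d + 1), ← rpow_neg (by positivity)]
    exact rpow_le_rpow_of_exponent_le (one_le_pow₀ (by norm_num)) (by push_cast; linarith)
  have hpow : ((2 : ℝ) ^ (j - 2)) ^ (d + 1) * 4 ^ (d + 1) = 2 ^ (j * d) * 2 ^ j := by
    rw [show (4 : ℝ) = 2 ^ 2 by norm_num, ← mul_pow, ← pow_add, Nat.sub_add_cancel hj, ← pow_mul,
      ← pow_add, mul_add_one]
  calc ((2 : ℝ) ^ (j - 2)) ^ (-M) * (1 + y)
      ≤ (((2 : ℝ) ^ (j - 2)) ^ (d + 1))⁻¹ * (d * (1 + j)) :=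
        mul_le_mul hdecay (by nlinarith) (by linarith) (by positivity)
    _ = 4 ^ (d + 1) * d * ((2 : ℝ) ^ (j * d))⁻¹ * ((1 + j) / 2 ^ j) := by
        rw [eq_div_of_mul_eq (by positivity) hpow]; field_simp
    _ ≤ 4 ^ (d + 1) * d * ((2 : ℝ) ^ (j * d))⁻¹ * (4 * (1 + j) ^ (-δ)) := by
        gcongr; exact one_add_div_two_pow_le hδ j
    _ = 4 ^ (d + 2) * d * dyadicDecay d δ j := by unfold dyadicDecay; ring

theorem one_div_two_pow_mul_log_rpow_le {d : ℕ} (hd : 1 ≤ d) {δ : ℝ} (hδ : 0 ≤ δ) {j : ℕ}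
    (hj : 2 * (d + 2) ≤ j) :
    1 / ((2 : ℝ) ^ ((j - (d + 2)) * d) * Real.log ((2 : ℝ) ^ ((j - (d + 2)) * d)) ^ δ)
      ≤ 2 ^ ((d + 2) * d) * (4 / Real.log 2) ^ δ * dyadicDecay d δ j := by
  set L := j - (d + 2)
  have hpow : (2 : ℝ) ^ (L * d) * 2 ^ ((d + 2) * d) = 2 ^ (j * d) := by
    rw [← pow_add, ← add_mul, Nat.sub_add_cancel (by omega)]
  have hlog : (1 + j) * (Real.log 2 / 4) ≤ Real.log ((2 : ℝ) ^ (L * d)) := by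
    have hL : 1 + j ≤ 4 * (L * d) := by nlinarith [Nat.sub_add_cancel (by omega : d + 2 ≤ j)]
    rw [Real.log_pow]
    have : (1 + j : ℝ) ≤ 4 * (L * d : ℕ) := by exact_mod_cast hL
    nlinarith [log_pos one_lt_two]
  have hlog2 := log_pos one_lt_two
  calc 1 / ((2 : ℝ) ^ (L * d) * Real.log ((2 : ℝ) ^ (L * d)) ^ δ)
      ≤ 1 / ((2 : ℝ) ^ (L * d) * ((1 + j) * (Real.log 2 / 4)) ^ δ) := by gcongr
    _ = 2 ^ ((d + 2) * d) * (4 / Real.log 2) ^ δ * dyadicDecay d δ j := by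
        unfold dyadicDecay
        rw [← hpow, mul_rpow (by positivity) (by positivity),
          div_rpow (by positivity) (by norm_num), div_rpow (by norm_num) (by positivity),
          rpow_neg (by positivity)]
        field_simp

def weightedLatticeSum {d : ℕ} (δ M : ℝ) (lam : ℕ → Fin d → ℤ) (x : EuclideanSpace ℝ (Fin d)) :
    ℝ :=
  ∑' m : ℕ, if 100 ≤ m then
    1 / ((m : ℝ) * Real.log m ^ δ) * (1 + ‖x - toEuc (lam m)‖) ^ (-M) else 0

section WeightedLatticeSum

variable {d : ℕ} {δ M A : ℝ} {lam : ℕ → Fin d → ℤ}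

theorem weightedLatticeSum_le (hδ : 0 ≤ δ) {x : EuclideanSpace ℝ (Fin d)}
    (hA : ∀ t : Finset ℕ, ∑ m ∈ t, (if 100 ≤ m then (1 + ‖x - toEuc (lam m)‖) ^ (-M) else 0) ≤ A)
    (K : ℕ) {ε B : ℝ} (hε : 0 ≤ ε) (hB : 0 ≤ B)
    (hhead : ∀ m, 100 ≤ m → m ≤ K → (1 + ‖x - toEuc (lam m)‖) ^ (-M) ≤ ε)
    (htail : ∀ m, 100 ≤ m → K < m → 1 / ((m : ℝ) * Real.log m ^ δ) ≤ B) :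
    weightedLatticeSum δ M lam x ≤ ε * (1 + Real.log K) + B * A := by
  refine tsum_le_of_head_tail K (fun m => ?_) hε hB hA (fun m hmK => ?_) fun m hKm => ?_
  · dsimp only [Pi.zero_apply]
    split_ifs <;> positivity
  · split_ifs with hm
    · rw [mul_comm ε]
      exact mul_le_mul (one_div_mul_log_rpow_le_inv hδ (by omega)) (hhead m hm hmK)
        (by positivity) (by positivity)
    · positivity
  · split_ifs with hm
    · exact mul_le_mul_of_nonneg_right (htail m hm hKm) (by positivity)
    · simp

theorem weightedLatticeSum_le_of_sum_le (hδ : 0 ≤ δ) {x : EuclideanSpace ℝ (Fin d)}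
    (hA : ∀ t : Finset ℕ, ∑ m ∈ t, (if 100 ≤ m then (1 + ‖x - toEuc (lam m)‖) ^ (-M) else 0) ≤ A) :
    weightedLatticeSum δ M lam x ≤ A := by
  have := weightedLatticeSum_le hδ hA 0 le_rfl zero_le_one (fun m hm h0 => by omega) fun m hm _ =>
    (one_div_mul_log_rpow_le_inv hδ (by omega)).trans (inv_le_one_of_one_le₀ (by
      exact_mod_cast (by omega : 1 ≤ m)))
  simpa using this

theorem weightedLatticeSum_le_of_large (hd : 1 ≤ d) (hδ : 0 ≤ δ) (hδ1 : δ ≤ 1)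
    (hM : (d : ℝ) + 1 ≤ M)
    (hbd : ∀ m, 1 ≤ m → ‖toEuc (lam m)‖ ≤ Real.sqrt d * (m : ℝ) ^ ((1 : ℝ) / d))
    {x : EuclideanSpace ℝ (Fin d)}
    (hA : ∀ t : Finset ℕ, ∑ m ∈ t, (if 100 ≤ m then (1 + ‖x - toEuc (lam m)‖) ^ (-M) else 0) ≤ A)
    {j : ℕ} (hj : 2 * (d + 2) ≤ j) (hx : (2 : ℝ) ^ (j - 1) < ‖x‖) :
    weightedLatticeSum δ M lam x ≤
      (4 ^ (d + 2) * d + 2 ^ ((d + 2) * d) * (4 / Real.log 2) ^ δ * A) * dyadicDecay d δ j := by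
  obtain ⟨L, hL⟩ : ∃ L, L = j - (d + 2) := ⟨_, rfl⟩
  -- below `K`, the lattice points `λ_m` lie in the ball of radius `2^(j-2)`, far from `x`
  set K : ℕ := 2 ^ (L * d)
  have hK : (K : ℝ) = 2 ^ (L * d) := by push_cast [K]; rfl
  have hLd : 1 ≤ L * d := Nat.mul_pos (by omega) (by omega)
  have hK1 : (1 : ℝ) < K := by rw [hK]; exact one_lt_pow₀ one_lt_two (by omega)
  have hlogK : Real.log K ≤ j * d := by
    rw [hK, Real.log_pow]
    have : ((L * d : ℕ) : ℝ) ≤ j * d := by push_cast; gcongr; exact_mod_cast (by omega : L ≤ j)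
    nlinarith [log_two_lt_d9, log_pos one_lt_two]
  have hA0 : 0 ≤ A := by simpa using hA ∅
  have hhead : ∀ m, 100 ≤ m → m ≤ K →
      (1 + ‖x - toEuc (lam m)‖) ^ (-M) ≤ ((2 : ℝ) ^ (j - 2)) ^ (-M) := by
    intro m hm hmK
    refine one_add_norm_sub_rpow_neg_le (by linarith) (by positivity) ?_ ?_
    · calc ‖toEuc (lam m)‖ ≤ √d * (m : ℝ) ^ ((1 : ℝ) / d) := hbd m (by omega)
        _ ≤ 2 ^ d * 2 ^ L := sqrt_mul_rpow_one_div_le hd (by positivity) (by positivity)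
            (by rw [← pow_mul, ← hK]; exact_mod_cast hmK)
        _ = 2 ^ (j - 2) := by rw [← pow_add]; congr 1; omega
    · rw [← pow_succ', show j - 2 + 1 = j - 1 by omega]
      exact hx.le
  have htail : ∀ m, 100 ≤ m → K < m → 1 / ((m : ℝ) * Real.log m ^ δ) ≤
      1 / ((2 : ℝ) ^ (L * d) * Real.log ((2 : ℝ) ^ (L * d)) ^ δ) := by
    intro m _ hKm
    rw [← hK]
    exact one_div_mul_log_rpow_le_of_le hδ hK1 (by exact_mod_cast hKm.le)
  calc weightedLatticeSum δ M lam x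
      ≤ ((2 : ℝ) ^ (j - 2)) ^ (-M) * (1 + Real.log K)
        + 1 / ((2 : ℝ) ^ (L * d) * Real.log ((2 : ℝ) ^ (L * d)) ^ δ) * A :=
        weightedLatticeSum_le hδ hA K (by positivity) (one_div_nonneg.mpr (mul_nonneg
          (by positivity) (rpow_nonneg (log_nonneg (one_le_pow₀ one_le_two)) δ))) hhead htail
    _ ≤ 4 ^ (d + 2) * d * dyadicDecay d δ j
        + 2 ^ ((d + 2) * d) * (4 / Real.log 2) ^ δ * dyadicDecay d δ j * A := by
        refine add_le_add
          (two_pow_rpow_neg_mul_le hd hδ1 hM (by omega) (log_nonneg hK1.le) hlogK)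
          (mul_le_mul_of_nonneg_right ?_ hA0)
        rw [hL]
        exact one_div_two_pow_mul_log_rpow_le hd hδ hj
    _ = (4 ^ (d + 2) * d + 2 ^ ((d + 2) * d) * (4 / Real.log 2) ^ δ * A) * dyadicDecay d δ j := by
        ring

theorem exists_weightedLatticeSum_le_dyadicDecay (hd : 1 ≤ d) (hδ : 0 ≤ δ) (hδ1 : δ ≤ 1)
    (hM : (d : ℝ) + 1 ≤ M)
    (hbd : ∀ m, 1 ≤ m → ‖toEuc (lam m)‖ ≤ Real.sqrt d * (m : ℝ) ^ ((1 : ℝ) / d))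
    (hA : ∀ (x : EuclideanSpace ℝ (Fin d)) (t : Finset ℕ),
      ∑ m ∈ t, (if 100 ≤ m then (1 + ‖x - toEuc (lam m)‖) ^ (-M) else 0) ≤ A) :
    ∃ C, 0 ≤ C ∧ ∀ (j : ℕ) (x : EuclideanSpace ℝ (Fin d)), (2 : ℝ) ^ (j - 1) < ‖x‖ →
      weightedLatticeSum δ M lam x ≤ C * dyadicDecay d δ j := by
  have hA0 : 0 ≤ A := by simpa using hA 0 ∅
  set C₀ := 4 ^ (d + 2) * d + 2 ^ ((d + 2) * d) * (4 / Real.log 2) ^ δ * A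
  have hC₀ : 0 ≤ C₀ := by
    have := rpow_nonneg (div_nonneg zero_le_four (log_nonneg one_le_two)) δ
    positivity
  set J := 2 * (d + 2)
  have hJ := dyadicDecay_pos d δ J
  refine ⟨C₀ + A / dyadicDecay d δ J, by positivity, fun j x hx => ?_⟩
  have hdecay := (dyadicDecay_pos d δ j).le
  rcases le_or_gt J j with hJj | hjJ
  · calc weightedLatticeSum δ M lam x ≤ C₀ * dyadicDecay d δ j :=
          weightedLatticeSum_le_of_large hd hδ hδ1 hM hbd (hA x) hJj hx
      _ ≤ (C₀ + A / dyadicDecay d δ J) * dyadicDecay d δ j := by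
          gcongr; exact le_add_of_nonneg_right (div_nonneg hA0 hJ.le)
  · -- for `j < J` the uniform bound `A` suffices, since `dyadicDecay` is decreasing in `j`
    calc weightedLatticeSum δ M lam x ≤ A := weightedLatticeSum_le_of_sum_le hδ (hA x)
      _ = A / dyadicDecay d δ J * dyadicDecay d δ J := by field_simp
      _ ≤ A / dyadicDecay d δ J * dyadicDecay d δ j := by gcongr; exact dyadicDecay_anti hδ hjJ.le
      _ ≤ (C₀ + A / dyadicDecay d δ J) * dyadicDecay d δ j := by gcongr; linarith

end WeightedLatticeSum

/-- Pointwise bounds on `∑_{m≥100} (1/(m (ln m)^δ)) (1+|x−λ_m|)^{−M}` on dyadic shells: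
on `2^{j−1} < |x| ≤ 2^j` it is `≲ 2^{−jd}(1+j)^{−δ}`, and on `|x| ≤ 1` it is bounded. -/
theorem stmt3 (d : ℕ) (hd : 1 ≤ d) (δ M : ℝ) (hδ : 1 / 2 < δ) (hδ1 : δ ≤ 1)
    (hM : (d : ℝ) + 1 ≤ M) (lam : ℕ → Fin d → ℤ)
    (hinj : ∀ m m', 1 ≤ m → 1 ≤ m' → lam m = lam m' → m = m')
    (hbd : ∀ m, 1 ≤ m → ‖toEuc (lam m)‖ ≤ Real.sqrt d * (m : ℝ) ^ ((1 : ℝ) / d)) :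
    ∃ C : ℝ, 0 < C ∧
      ((∀ j : ℕ, 1 ≤ j → ∀ x : EuclideanSpace ℝ (Fin d),
        (2 : ℝ) ^ (j - 1) < ‖x‖ → ‖x‖ ≤ (2 : ℝ) ^ j →
        (∑' m : ℕ, if 100 ≤ m then
            1 / ((m : ℝ) * Real.log m ^ δ) * (1 + ‖x - toEuc (lam m)‖) ^ (-M) else 0) ≤
          C * ((2 : ℝ) ^ (j * d))⁻¹ * (1 + (j : ℝ)) ^ (-δ)) ∧
      (∀ x : EuclideanSpace ℝ (Fin d), ‖x‖ ≤ 1 →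
        (∑' m : ℕ, if 100 ≤ m then
            1 / ((m : ℝ) * Real.log m ^ δ) * (1 + ‖x - toEuc (lam m)‖) ^ (-M) else 0) ≤ C)) := by
  have hδ0 : 0 ≤ δ := by linarith
  obtain ⟨A, hA⟩ := exists_sum_one_add_norm_sub_rpow_neg_le (M := M) hd (by linarith)
  have hlam : ∀ x t, ∑ m ∈ t, (if 100 ≤ m then (1 + ‖x - toEuc (lam m)‖) ^ (-M) else 0) ≤ A :=
    fun x => sum_ite_comp_le_of_injOn
      (fun m hm m' hm' => hinj m m' (by simp at hm; omega) (by simp at hm'; omega)) (hA x)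
  have hA0 : 0 ≤ A := by simpa using hA 0 ∅
  obtain ⟨C, hC0, hC⟩ := exists_weightedLatticeSum_le_dyadicDecay hd hδ0 hδ1 hM hbd hlam
  refine ⟨C + A + 1, by positivity, fun j _ x hx _ => ?_, fun x _ => ?_⟩
  · calc weightedLatticeSum δ M lam x ≤ C * dyadicDecay d δ j := hC j x hx
      _ ≤ (C + A + 1) * dyadicDecay d δ j := by
          gcongr; exacts [(dyadicDecay_pos d δ j).le, by linarith]
      _ = _ := by unfold dyadicDecay; ring
  · show weightedLatticeSum δ M lam x ≤ _
    linarith [weightedLatticeSum_le_of_sum_le hδ0 (hlam x)]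
end
end

section
/- Let d ≥ 1 and m ≥ 2 be integers, let s_1, …, s_m ≥ 0, and set s := s_1+⋯+s_m. Then there is a constant C > 0 (depending only on d, m, s_1,…,s_m) such that for all measurable F, G : ℝ^d → [0,∞), ∫_{(ℝ^d)^m} ( ∏_{j=1}^m (1+4π²|x_j|²)^{s_j} ) F(x_1+⋯+x_m)² ∏_{j=2}^m G(x_1−x_j)² dx_1⋯dx_m ≤ C ( ∫_{ℝ^d} (1+4π²|y|²)^{s} F(y)² dy ) ∏_{j=2}^m ( ∫_{ℝ^d} (1+4π²|y|²)^{s} G(y)² dy ). -/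
/-!
Substitute `y_{i₀} = ∑ x_j` and `y_l = x_{i₀} - x_l` for `l ≠ i₀`. Summing gives
`m • x_{i₀} = ∑ y_l`, so every `‖x_j‖ ≤ 2 ∑ ‖y_l‖`; this makes the substitution invertible and
yields the Peetre-type bound `1 + c‖x_j‖² ≤ 4m ∏_l (1 + c‖y_l‖²)`, hence
`∏_j (1 + c‖x_j‖²)^{s_j} ≤ (4m)^s ∏_l (1 + c‖y_l‖²)^s`. In the new variables the integrand is a
product of functions of the separate `y_l`, so after the linear change of variables the integral
factorizes by Tonelli.
-/

open Real MeasureTheory Finset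
open scoped ENNReal

namespace MeasureTheory

variable {E : Type*} [MeasurableSpace E]

theorem lintegral_fin_nat_prod_eq_prod {n : ℕ} (μ : Fin n → Measure E) [∀ i, SigmaFinite (μ i)]
    {f : Fin n → E → ℝ≥0∞} (hf : ∀ i, Measurable (f i)) :
    ∫⁻ x, ∏ i, f i (x i) ∂Measure.pi μ = ∏ i, ∫⁻ y, f i y ∂μ i := by
  induction n with
  | zero => simp
  | succ n ih =>
    have hsplit : ∀ p : E × (Fin n → E),
        ∏ i, f i ((MeasurableEquiv.piFinSuccAbove (fun _ => E) 0).symm p i) =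
          f 0 p.1 * ∏ i : Fin n, f i.succ (p.2 i) := fun p => by
      simp [Fin.prod_univ_succ, MeasurableEquiv.piFinSuccAbove_symm_apply, Fin.insertNthEquiv]
    rw [← (measurePreserving_piFinSuccAbove μ 0).symm.lintegral_comp_emb
      (MeasurableEquiv.measurableEmbedding _)]
    simp_rw [hsplit, Fin.prod_univ_succ, Fin.zero_succAbove]
    rw [lintegral_prod_mul (f := f 0) (g := fun x : Fin n → E => ∏ i, f i.succ (x i))
      (hf 0).aemeasurable (Finset.measurable_prod _ fun i _ =>
        (hf i.succ).comp (measurable_pi_apply i)).aemeasurable, ih _ fun i => hf i.succ]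

theorem lintegral_fintype_prod_eq_prod {ι : Type*} [Fintype ι] (μ : ι → Measure E)
    [∀ i, SigmaFinite (μ i)] {f : ι → E → ℝ≥0∞} (hf : ∀ i, Measurable (f i)) :
    ∫⁻ x, ∏ i, f i (x i) ∂Measure.pi μ = ∏ i, ∫⁻ y, f i y ∂μ i := by
  let e := (Fintype.equivFin ι).symm
  rw [← (measurePreserving_piCongrLeft μ e).lintegral_comp_emb
    (MeasurableEquiv.measurableEmbedding _)]
  simp_rw [← e.prod_comp, MeasurableEquiv.coe_piCongrLeft, Equiv.piCongrLeft_apply_apply]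
  exact lintegral_fin_nat_prod_eq_prod _ fun i => hf _

theorem lintegral_mul_prod_erase_eq {ι : Type*} [Fintype ι] [DecidableEq ι] (μ : Measure E)
    [SigmaFinite μ] (i₀ : ι) {f g : E → ℝ≥0∞} (hf : Measurable f) (hg : Measurable g) :
    ∫⁻ y, f (y i₀) * ∏ l ∈ univ.erase i₀, g (y l) ∂Measure.pi (fun _ => μ) =
      (∫⁻ z, f z ∂μ) * ∏ _l ∈ univ.erase i₀, ∫⁻ z, g z ∂μ := by
  have hsplit : ∀ φ : (E → ℝ≥0∞) → ι → ℝ≥0∞,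
      ∏ l, φ (Function.update (fun _ => g) i₀ f l) l = φ f i₀ * ∏ l ∈ univ.erase i₀, φ g l := by
    intro φ
    rw [← mul_prod_erase univ _ (mem_univ i₀), Function.update_self]
    congr 1
    exact prod_congr rfl fun l hl => by rw [Function.update_of_ne (ne_of_mem_erase hl)]
  have hmeas : ∀ l, Measurable (Function.update (fun _ => g) i₀ f l) := fun l => by
    rcases eq_or_ne l i₀ with rfl | hl
    · simpa
    · simpa [hl]
  calc ∫⁻ y, f (y i₀) * ∏ l ∈ univ.erase i₀, g (y l) ∂Measure.pi (fun _ => μ)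
      = ∫⁻ y, ∏ l, Function.update (fun _ => g) i₀ f l (y l) ∂Measure.pi (fun _ => μ) :=
        lintegral_congr fun y => (hsplit fun φ l => φ (y l)).symm
    _ = ∏ l, ∫⁻ z, Function.update (fun _ => g) i₀ f l z ∂μ :=
        lintegral_fintype_prod_eq_prod _ hmeas
    _ = _ := hsplit fun φ _ => ∫⁻ z, φ z ∂μ

end MeasureTheory

theorem MeasureTheory.Measure.lintegral_comp_linearMap_of_det_ne_zero {E : Type*}
    [NormedAddCommGroup E] [NormedSpace ℝ E] [MeasurableSpace E] [BorelSpace E]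
    [FiniteDimensional ℝ E] (μ : Measure E) [μ.IsAddHaarMeasure] {f : E →ₗ[ℝ] E}
    (hf : LinearMap.det f ≠ 0) (g : E → ℝ≥0∞) :
    ∫⁻ x, g (f x) ∂μ = ENNReal.ofReal |(LinearMap.det f)⁻¹| * ∫⁻ y, g y ∂μ := by
  rw [← smul_eq_mul, ← lintegral_smul_measure,
    ← Measure.map_linearMap_addHaar_eq_smul_addHaar μ hf]
  exact (lintegral_map_equiv g
    (f.equivOfDetNeZero hf).toContinuousLinearEquiv.toHomeomorph.toMeasurableEquiv).symm

theorem Finset.one_add_sum_le_prod_one_add {ι R : Type*} [CommSemiring R] [PartialOrder R]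
    [IsOrderedRing R] (s : Finset ι) {b : ι → R} (hb : ∀ i ∈ s, 0 ≤ b i) :
    1 + ∑ i ∈ s, b i ≤ ∏ i ∈ s, (1 + b i) := by
  induction s using Finset.cons_induction with
  | empty => simp
  | cons a s ha ih =>
    have hba : 0 ≤ b a := hb a (mem_cons_self a s)
    have hs : ∀ i ∈ s, 0 ≤ b i := fun i hi => hb i (mem_cons_of_mem hi)
    rw [sum_cons, prod_cons]
    calc 1 + (b a + ∑ i ∈ s, b i)
        ≤ 1 + (b a + ∑ i ∈ s, b i) + b a * ∑ i ∈ s, b i :=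
          le_add_of_nonneg_right (mul_nonneg hba (sum_nonneg hs))
      _ = (1 + b a) * (1 + ∑ i ∈ s, b i) := by ring
      _ ≤ (1 + b a) * ∏ i ∈ s, (1 + b i) :=
          mul_le_mul_of_nonneg_left (ih hs) (add_nonneg zero_le_one hba)

theorem Finset.prod_rpow_le_rpow_sum {ι : Type*} (t : Finset ι) {a s : ι → ℝ} {B : ℝ}
    (ha : ∀ j ∈ t, 0 ≤ a j) (haB : ∀ j ∈ t, a j ≤ B) (hs : ∀ j ∈ t, 0 ≤ s j) :
    ∏ j ∈ t, a j ^ s j ≤ B ^ ∑ j ∈ t, s j := by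
  rcases t.eq_empty_or_nonempty with rfl | ⟨i, hi⟩
  · simp
  rw [rpow_sum_of_nonneg ((ha i hi).trans (haB i hi)) hs]
  exact prod_le_prod (fun j hj => rpow_nonneg (ha j hj) _)
    fun j hj => rpow_le_rpow (ha j hj) (haB j hj) (hs j hj)

theorem one_add_mul_sq_le_card_mul_prod {ι : Type*} [Fintype ι] [Nonempty ι] {c a : ℝ}
    (hc : 0 ≤ c) {y : ι → ℝ} (ha : |a| ≤ 2 * ∑ l, y l) :
    1 + c * a ^ 2 ≤ 4 * Fintype.card ι * ∏ l, (1 + c * y l ^ 2) := by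
  have hcard : (1 : ℝ) ≤ Fintype.card ι := by exact_mod_cast Fintype.card_pos
  have hsq : a ^ 2 ≤ 4 * Fintype.card ι * ∑ l, y l ^ 2 :=
    calc a ^ 2 = |a| ^ 2 := (sq_abs a).symm
      _ ≤ (2 * ∑ l, y l) ^ 2 := pow_le_pow_left₀ (abs_nonneg a) ha 2
      _ = 4 * (∑ l, y l) ^ 2 := by ring
      _ ≤ 4 * (Fintype.card ι * ∑ l, y l ^ 2) := by
          gcongr; simpa using sq_sum_le_card_mul_sum_sq (s := univ) (f := y)
      _ = _ := by ring
  have hprod := one_add_sum_le_prod_one_add univ fun l _ => mul_nonneg hc (sq_nonneg (y l))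
  rw [← mul_sum] at hprod
  calc 1 + c * a ^ 2 ≤ 1 + 4 * Fintype.card ι * (c * ∑ l, y l ^ 2) := by
        linarith [mul_le_mul_of_nonneg_left hsq hc]
    _ ≤ 4 * Fintype.card ι * (1 + c * ∑ l, y l ^ 2) := by nlinarith
    _ ≤ 4 * Fintype.card ι * ∏ l, (1 + c * y l ^ 2) := by gcongr

namespace LinearMap

variable (R : Type*) {ι E : Type*} [Fintype ι] [DecidableEq ι]

section Module

variable [CommRing R] [AddCommGroup E] [Module R E]

def sumDiff (i₀ : ι) : (ι → E) →ₗ[R] (ι → E) where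
  toFun x l := if l = i₀ then ∑ j, x j else x i₀ - x l
  map_add' x y := funext fun l => by
    by_cases hl : l = i₀ <;> simp [hl, sum_add_distrib, add_sub_add_comm]
  map_smul' c x := funext fun l => by
    by_cases hl : l = i₀ <;> simp [hl, smul_sum, smul_sub]

variable {R} {i₀ : ι}

@[simp]
theorem sumDiff_apply_self (x : ι → E) : sumDiff R i₀ x i₀ = ∑ j, x j := by
  simp [sumDiff]

theorem sumDiff_apply_of_ne {l : ι} (hl : l ≠ i₀) (x : ι → E) :
    sumDiff R i₀ x l = x i₀ - x l := by
  simp [sumDiff, hl]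

theorem sum_sumDiff (x : ι → E) : ∑ l, sumDiff R i₀ x l = Fintype.card ι • x i₀ := by
  have h : ∀ l, sumDiff R i₀ x l = (x i₀ - x l) + if l = i₀ then ∑ j, x j else 0 := fun l => by
    by_cases hl : l = i₀
    · subst hl; simp
    · simp [sumDiff_apply_of_ne hl, hl]
  simp [h, sum_add_distrib, sum_sub_distrib]

end Module

variable [NormedAddCommGroup E] [NormedSpace ℝ E] {i₀ : ι}

theorem norm_le_two_mul_sum_norm_sumDiff (x : ι → E) (j : ι) :
    ‖x j‖ ≤ 2 * ∑ l, ‖sumDiff ℝ i₀ x l‖ := by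
  have hcard : (1 : ℝ) ≤ Fintype.card ι := by
    exact_mod_cast Fintype.card_pos_iff.2 ⟨i₀⟩
  have h₀ : ‖x i₀‖ ≤ ∑ l, ‖sumDiff ℝ i₀ x l‖ :=
    calc ‖x i₀‖ ≤ Fintype.card ι * ‖x i₀‖ := le_mul_of_one_le_left (norm_nonneg _) hcard
      _ = ‖∑ l, sumDiff ℝ i₀ x l‖ := by rw [sum_sumDiff, RCLike.norm_nsmul ℝ, nsmul_eq_mul]
      _ ≤ ∑ l, ‖sumDiff ℝ i₀ x l‖ := norm_sum_le _ _
  by_cases hj : j = i₀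
  · subst hj
    linarith [sum_nonneg fun l (_ : l ∈ univ) => norm_nonneg (sumDiff ℝ j x l)]
  · calc ‖x j‖ = ‖x i₀ - sumDiff ℝ i₀ x j‖ := by rw [sumDiff_apply_of_ne hj, sub_sub_cancel]
      _ ≤ ‖x i₀‖ + ‖sumDiff ℝ i₀ x j‖ := norm_sub_le _ _
      _ ≤ 2 * ∑ l, ‖sumDiff ℝ i₀ x l‖ := by
        linarith [single_le_sum (fun l _ => norm_nonneg (sumDiff ℝ i₀ x l)) (mem_univ j)]

theorem sumDiff_injective : Function.Injective (sumDiff ℝ i₀ : (ι → E) → ι → E) := by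
  refine (injective_iff_map_eq_zero _).2 fun x hx => funext fun j => norm_le_zero_iff.1 ?_
  simpa [hx] using norm_le_two_mul_sum_norm_sumDiff (i₀ := i₀) x j

theorem det_sumDiff_ne_zero [FiniteDimensional ℝ E] :
    LinearMap.det (sumDiff ℝ i₀ : (ι → E) →ₗ[ℝ] ι → E) ≠ 0 :=
  ((LinearMap.isUnit_iff_isUnit_det _).1 ((Module.End.isUnit_iff _).2
    ⟨sumDiff_injective, LinearMap.injective_iff_surjective.1 sumDiff_injective⟩)).ne_zero

end LinearMap

open LinearMap

section PeetreBound

variable {ι E : Type*} [Fintype ι] [DecidableEq ι] [NormedAddCommGroup E] [NormedSpace ℝ E]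
  {i₀ : ι} {c : ℝ} {s : ι → ℝ}

theorem prod_one_add_mul_sq_norm_rpow_le (hc : 0 ≤ c) (hs : ∀ j, 0 ≤ s j) (x : ι → E) :
    ∏ j, (1 + c * ‖x j‖ ^ 2) ^ s j ≤
      (4 * Fintype.card ι : ℝ) ^ (∑ j, s j) *
        ∏ l, (1 + c * ‖sumDiff ℝ i₀ x l‖ ^ 2) ^ (∑ j, s j) := by
  have : Nonempty ι := ⟨i₀⟩
  have hw : ∀ z : E, 0 ≤ 1 + c * ‖z‖ ^ 2 := fun z => by positivity
  calc ∏ j, (1 + c * ‖x j‖ ^ 2) ^ s j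
      ≤ ((4 * Fintype.card ι : ℝ) * ∏ l, (1 + c * ‖sumDiff ℝ i₀ x l‖ ^ 2)) ^ (∑ j, s j) :=
        prod_rpow_le_rpow_sum univ (fun j _ => hw _) (fun j _ => one_add_mul_sq_le_card_mul_prod hc
          (by simpa using norm_le_two_mul_sum_norm_sumDiff x j)) fun j _ => hs j
    _ = _ := by
        rw [mul_rpow (by positivity) (prod_nonneg fun l _ => hw _),
          finsetProd_rpow _ _ fun l _ => hw _]

theorem prod_rpow_mul_sq_le_sumDiff (hc : 0 ≤ c) (hs : ∀ j, 0 ≤ s j) (F G : E → ℝ)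
    (x : ι → E) :
    (∏ j, (1 + c * ‖x j‖ ^ 2) ^ s j) * F (∑ j, x j) ^ 2 *
        ∏ j ∈ univ.erase i₀, G (x i₀ - x j) ^ 2 ≤
      (4 * Fintype.card ι : ℝ) ^ (∑ j, s j) *
        ((1 + c * ‖sumDiff ℝ i₀ x i₀‖ ^ 2) ^ (∑ j, s j) * F (sumDiff ℝ i₀ x i₀) ^ 2) *
        ∏ l ∈ univ.erase i₀,
          ((1 + c * ‖sumDiff ℝ i₀ x l‖ ^ 2) ^ (∑ j, s j) * G (sumDiff ℝ i₀ x l) ^ 2) := by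
  have hG : ∏ j ∈ univ.erase i₀, G (x i₀ - x j) ^ 2 =
      ∏ j ∈ univ.erase i₀, G (sumDiff ℝ i₀ x j) ^ 2 :=
    prod_congr rfl fun j hj => by rw [sumDiff_apply_of_ne (ne_of_mem_erase hj)]
  rw [hG, ← sumDiff_apply_self (R := ℝ) (i₀ := i₀) x]
  set y := sumDiff ℝ i₀ x
  set w : E → ℝ := fun z => (1 + c * ‖z‖ ^ 2) ^ (∑ j, s j)
  have hw : ∏ l, w (y l) = w (y i₀) * ∏ l ∈ univ.erase i₀, w (y l) :=
    (mul_prod_erase univ _ (mem_univ i₀)).symm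
  calc (∏ j, (1 + c * ‖x j‖ ^ 2) ^ s j) * F (y i₀) ^ 2 * ∏ j ∈ univ.erase i₀, G (y j) ^ 2
      = (∏ j, (1 + c * ‖x j‖ ^ 2) ^ s j) * (F (y i₀) ^ 2 * ∏ j ∈ univ.erase i₀, G (y j) ^ 2) :=
        mul_assoc _ _ _
    _ ≤ ((4 * Fintype.card ι : ℝ) ^ (∑ j, s j) * ∏ l, w (y l)) *
          (F (y i₀) ^ 2 * ∏ j ∈ univ.erase i₀, G (y j) ^ 2) := by
        gcongr
        exact prod_one_add_mul_sq_norm_rpow_le hc hs x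
    _ = _ := by rw [hw, prod_mul_distrib]; ring

end PeetreBound

section WeightedIntegral

variable {ι E : Type*} [Fintype ι] [DecidableEq ι] [NormedAddCommGroup E] [NormedSpace ℝ E]
  [FiniteDimensional ℝ E] [MeasureSpace E] [BorelSpace E] [(volume : Measure E).IsAddHaarMeasure]
  {c : ℝ} {s : ι → ℝ}

theorem lintegral_weighted_sumDiff_le (i₀ : ι) (hc : 0 ≤ c) (hs : ∀ j, 0 ≤ s j) {F G : E → ℝ}
    (hF : Measurable F) (hG : Measurable G) :
    ∫⁻ x : ι → E, ENNReal.ofReal ((∏ j, (1 + c * ‖x j‖ ^ 2) ^ s j) * F (∑ j, x j) ^ 2 *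
        ∏ j ∈ univ.erase i₀, G (x i₀ - x j) ^ 2) ≤
      ENNReal.ofReal ((4 * Fintype.card ι : ℝ) ^ (∑ j, s j) *
          |(LinearMap.det (sumDiff ℝ i₀ : (ι → E) →ₗ[ℝ] ι → E))⁻¹|) *
        (∫⁻ y, ENNReal.ofReal ((1 + c * ‖y‖ ^ 2) ^ (∑ j, s j) * F y ^ 2)) *
        ∏ _j ∈ univ.erase i₀, ∫⁻ y, ENNReal.ofReal ((1 + c * ‖y‖ ^ 2) ^ (∑ j, s j) * G y ^ 2) := by
  set K : ℝ := (4 * Fintype.card ι : ℝ) ^ (∑ j, s j)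
  have hK : 0 ≤ K := by positivity
  set D : ℝ := |(LinearMap.det (sumDiff ℝ i₀ : (ι → E) →ₗ[ℝ] ι → E))⁻¹|
  set wF : E → ℝ≥0∞ := fun z => ENNReal.ofReal ((1 + c * ‖z‖ ^ 2) ^ (∑ j, s j) * F z ^ 2)
  set wG : E → ℝ≥0∞ := fun z => ENNReal.ofReal ((1 + c * ‖z‖ ^ 2) ^ (∑ j, s j) * G z ^ 2)
  have hwF : Measurable wF := by fun_prop
  have hwG : Measurable wG := by fun_prop
  set Φ : (ι → E) → ℝ≥0∞ := fun y => wF (y i₀) * ∏ l ∈ univ.erase i₀, wG (y l)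
  have hpt : ∀ x : ι → E,
      ENNReal.ofReal ((∏ j, (1 + c * ‖x j‖ ^ 2) ^ s j) * F (∑ j, x j) ^ 2 *
        ∏ j ∈ univ.erase i₀, G (x i₀ - x j) ^ 2) ≤ ENNReal.ofReal K * Φ (sumDiff ℝ i₀ x) := by
    intro x
    simp only [Φ, wF, wG]
    rw [← ENNReal.ofReal_prod_of_nonneg fun l _ => by positivity,
      ← ENNReal.ofReal_mul (by positivity), ← ENNReal.ofReal_mul hK, ← mul_assoc]
    exact ENNReal.ofReal_le_ofReal (prod_rpow_mul_sq_le_sumDiff hc hs F G x)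
  calc _ ≤ ∫⁻ x, ENNReal.ofReal K * Φ (sumDiff ℝ i₀ x) := lintegral_mono hpt
    _ = ENNReal.ofReal K * (ENNReal.ofReal D * ∫⁻ y, Φ y) := by
        rw [lintegral_const_mul' _ _ ENNReal.ofReal_ne_top,
          Measure.lintegral_comp_linearMap_of_det_ne_zero volume det_sumDiff_ne_zero]
    _ = ENNReal.ofReal K * (ENNReal.ofReal D *
          ((∫⁻ z, wF z) * ∏ _l ∈ univ.erase i₀, ∫⁻ z, wG z)) := by
        rw [volume_pi, lintegral_mul_prod_erase_eq volume i₀ hwF hwG]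
    _ = _ := by rw [ENNReal.ofReal_mul hK]; ring

end WeightedIntegral

/-- The change-of-variables inequality of Case 2: for `s = s_1+⋯+s_m`,
`∫_{(ℝ^d)^m} (∏_j (1+4π²|x_j|²)^{s_j}) F(x_1+⋯+x_m)² ∏_{j=2}^m G(x_1−x_j)² dx`
is dominated by `C (∫ (1+4π²|y|²)^s F(y)² dy) ∏_{j=2}^m (∫ (1+4π²|y|²)^s G(y)² dy)`. -/
theorem stmt10 (d m : ℕ) (hm : 2 ≤ m) (s : Fin m → ℝ) (hs : ∀ j, 0 ≤ s j) :
    ∃ C : ℝ, 0 < C ∧ ∀ F G : EuclideanSpace ℝ (Fin d) → ℝ,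
      Measurable F → Measurable G → (∀ y, 0 ≤ F y) → (∀ y, 0 ≤ G y) →
      (∫⁻ x : Fin m → EuclideanSpace ℝ (Fin d),
          ENNReal.ofReal ((∏ j, (1 + 4 * π ^ 2 * ‖x j‖ ^ 2) ^ s j) *
            F (∑ j, x j) ^ 2 *
            ∏ j ∈ Finset.univ.filter fun j : Fin m => (j : ℕ) ≠ 0,
              G (x ⟨0, by omega⟩ - x j) ^ 2)) ≤
        ENNReal.ofReal C *
          (∫⁻ y : EuclideanSpace ℝ (Fin d),
            ENNReal.ofReal ((1 + 4 * π ^ 2 * ‖y‖ ^ 2) ^ (∑ j, s j) * F y ^ 2)) *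
          ∏ j ∈ Finset.univ.filter fun j : Fin m => (j : ℕ) ≠ 0,
            (∫⁻ y : EuclideanSpace ℝ (Fin d),
              ENNReal.ofReal ((1 + 4 * π ^ 2 * ‖y‖ ^ 2) ^ (∑ j, s j) * G y ^ 2)) := by
  set i₀ : Fin m := ⟨0, by omega⟩
  have hfilter : (univ.filter fun j : Fin m => (j : ℕ) ≠ 0) = univ.erase i₀ := by
    ext j
    simp [i₀, Fin.ext_iff]
  have : Nonempty (Fin m) := ⟨i₀⟩
  refine ⟨(4 * Fintype.card (Fin m) : ℝ) ^ (∑ j, s j) *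
      |(LinearMap.det (sumDiff ℝ i₀ : (Fin m → EuclideanSpace ℝ (Fin d)) →ₗ[ℝ] _))⁻¹|,
    mul_pos (by positivity) (abs_pos.2 (inv_ne_zero det_sumDiff_ne_zero)),
    fun F G hF hG _ _ => ?_⟩
  rw [hfilter]
  exact lintegral_weighted_sumDiff_le i₀ (by positivity) hs hF hG
end
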